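/- Let H be the Taft algebra H_n of dimension n² at a primitive n-th root of unity q, generated by a group-like K (K^n = 1) and E with KE = qEK, E^n = 0, Δ(E) = E ⊗ K + 1 ⊗ E. Then H_n is doubly-balanced (i.e., there exist group-likes b ∈ H_n, β ∈ H_n^* with b² = g, β² = ζ satisfying the Kauffman–Radford condition) if and only if n is odd. -/

import Mathlib

/-!
A group-like square root `b` of `K` is some `K ^ m` with `K ^ (2m) = K`; applying the character
`ζ` gives `q ^ (2m) = q`, so `2m ≡ 1 [MOD n]` and `n` is odd. Conversely, for `n = 2t + 1` take
`b = K ^ (t + 1)` and `β = ζ ^ (t + 1)` (a convolution power), which are square roots of `K` and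
`ζ` because `K ^ n = 1` and `ζ ^ n = ε`. Both sides of the Kauffman–Radford condition are
algebra maps in `x`, so it suffices to compare them on `K` and `E`: `S²` fixes `K` and scales
`E` by `q`, and so does `x ↦ b (β ⇀ x ↼ β⁻¹) b⁻¹`.
-/

open TensorProduct HopfAlgebra

section Defs

variable {k H : Type*} [CommRing k] [Ring H] [HopfAlgebra k H]

/-- convolution product on the dual. -/
noncomputable def dualMul (p q : H →ₗ[k] k) : H →ₗ[k] k :=
  (LinearMap.mul' k k) ∘ₗ (TensorProduct.map p q) ∘ₗ (Coalgebra.comul (R := k))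

/-- iterated comultiplication `a ↦ (a₍₁₎ ⊗ a₍₂₎) ⊗ a₍₃₎`. -/
noncomputable def comul2 : H →ₗ[k] (H ⊗[k] H) ⊗[k] H :=
  (LinearMap.rTensor H (Coalgebra.comul (R := k))) ∘ₗ (Coalgebra.comul (R := k))

end Defs

open WithConv

lemma IsPrimitiveRoot.odd_of_pow_add_self_eq_self {G₀ : Type*} [CommGroupWithZero G₀] {q : G₀}
    {n m : ℕ} (hq : IsPrimitiveRoot q n) (hq0 : q ≠ 0) (h : q ^ (m + m) = q) : Odd n := by
  have hdvd : (n : ℤ) ∣ (m + m : ℕ) - 1 := by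
    rw [← hq.zpow_eq_one_iff_dvd, zpow_sub₀ hq0, zpow_natCast, h, zpow_one, div_self hq0]
  rw [Nat.odd_iff, ← Nat.two_dvd_ne_zero]
  intro h2
  have := (Int.natCast_dvd_natCast.mpr h2).trans hdvd
  omega

lemma pow_mul_eq_pow_smul_mul_pow {k A : Type*} [CommSemiring k] [Semiring A] [Algebra k A]
    {q : k} {a b : A} (h : a * b = q • (b * a)) (j : ℕ) : a ^ j * b = q ^ j • (b * a ^ j) := by
  induction j with
  | zero => simp
  | succ j ih =>
    calc a ^ (j + 1) * b = q • (a ^ j * b * a) := by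
          rw [pow_succ, mul_assoc, h, mul_smul_comm, mul_assoc]
      _ = q ^ (j + 1) • (b * a ^ (j + 1)) := by
        rw [ih, smul_mul_assoc, smul_smul, ← pow_succ', mul_assoc, ← pow_succ]

lemma AlgHom.ext_of_adjoin_pair_eq_top {R A B : Type*} [CommSemiring R] [Semiring A] [Semiring B]
    [Algebra R A] [Algebra R B] {a b : A} (h : Algebra.adjoin R {a, b} = ⊤) {φ ψ : A →ₐ[R] B}
    (ha : φ a = ψ a) (hb : φ b = ψ b) : φ = ψ :=
  AlgHom.ext_of_adjoin_eq_top h <| by rintro x (rfl | rfl) <;> assumption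

section Sandwich

variable {k H A : Type*} [CommRing k] [Ring H] [HopfAlgebra k H] [Semiring A] [Algebra k A]

variable (φ ψ : H →ₐ[k] k) (f : H →ₐ[k] A)

noncomputable def sandwichTensor : (H ⊗[k] H) ⊗[k] H →ₐ[k] A :=
  Algebra.TensorProduct.lift
    (Algebra.TensorProduct.lift ((Algebra.ofId k A).comp φ) f
      fun _ _ ↦ Algebra.commute_algebraMap_left _ _)
    ((Algebra.ofId k A).comp ψ) fun _ _ ↦ Algebra.commute_algebraMap_right _ _

lemma sandwichTensor_tmul (a b c : H) :
    sandwichTensor φ ψ f ((a ⊗ₜ[k] b) ⊗ₜ[k] c) = (φ a * ψ c) • f b := by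
  have h : sandwichTensor φ ψ f ((a ⊗ₜ[k] b) ⊗ₜ[k] c) =
      algebraMap k A (φ a) * f b * algebraMap k A (ψ c) := rfl
  rw [h, Algebra.smul_def, map_mul, mul_assoc, ← Algebra.commutes, ← mul_assoc]

/-- `x ↦ φ(x₍₁₎) ψ(x₍₃₎) • f(x₍₂₎)`; for `f` conjugation by `b` this is `b (ψ ⇀ x ↼ φ) b⁻¹`. -/
noncomputable def sandwich : H →ₐ[k] A :=
  (sandwichTensor φ ψ f).comp
    ((Algebra.TensorProduct.map (Bialgebra.comulAlgHom k H) (AlgHom.id k H)).comp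
      (Bialgebra.comulAlgHom k H))

lemma sandwich_apply (x : H) : sandwich φ ψ f x = sandwichTensor φ ψ f (comul2 (k := k) x) :=
  rfl

lemma sandwich_apply_of_comul2_eq {x : H} {ι : Type*} {s : Finset ι} {xs ys zs : ι → H}
    (hx : comul2 (k := k) x = ∑ i ∈ s, (xs i ⊗ₜ[k] ys i) ⊗ₜ[k] zs i) :
    sandwich φ ψ f x = ∑ i ∈ s, (φ (xs i) * ψ (zs i)) • f (ys i) := by
  simp only [sandwich_apply, hx, map_sum, sandwichTensor_tmul]

lemma comul2_eq_of_isGroupLikeElem {g : H} (hg : IsGroupLikeElem k g) :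
    comul2 (k := k) g = (g ⊗ₜ[k] g) ⊗ₜ[k] g := by
  simp [comul2, hg.comul_eq_tmul_self]

lemma comul2_eq_of_comul_eq {g e : H}
    (he : Coalgebra.comul (R := k) e = e ⊗ₜ[k] g + 1 ⊗ₜ[k] e) :
    comul2 (k := k) e = (e ⊗ₜ[k] g) ⊗ₜ[k] g + (1 ⊗ₜ[k] e) ⊗ₜ[k] g + (1 ⊗ₜ[k] 1) ⊗ₜ[k] e := by
  simp [comul2, he, Algebra.TensorProduct.one_def, add_tmul]

lemma sandwich_apply_of_isGroupLikeElem {g : H} (hg : IsGroupLikeElem k g) :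
    sandwich φ ψ f g = (φ g * ψ g) • f g := by
  rw [sandwich_apply, comul2_eq_of_isGroupLikeElem hg, sandwichTensor_tmul]

lemma sandwich_apply_of_comul_eq {g e : H}
    (he : Coalgebra.comul (R := k) e = e ⊗ₜ[k] g + 1 ⊗ₜ[k] e) :
    sandwich φ ψ f e = (φ e * ψ g) • f g + ψ g • f e + ψ e • 1 := by
  simp [sandwich_apply, comul2_eq_of_comul_eq he, sandwichTensor_tmul]

end Sandwich

section Convolution

variable {k H : Type*} [CommRing k] [Ring H] [HopfAlgebra k H]

lemma dualMul_toLinearMap (φ ψ : WithConv (H →ₐ[k] k)) :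
    dualMul φ.ofConv.toLinearMap ψ.ofConv.toLinearMap = (φ * ψ).ofConv.toLinearMap :=
  rfl

lemma convOne_toLinearMap :
    (1 : WithConv (H →ₐ[k] k)).ofConv.toLinearMap = Coalgebra.counit (R := k) := by
  ext; simp

lemma convMul_apply_of_isGroupLikeElem (φ ψ : WithConv (H →ₐ[k] k)) {g : H}
    (hg : IsGroupLikeElem k g) : (φ * ψ) g = φ g * ψ g := by
  simp [AlgHom.convMul_apply, hg.comul_eq_tmul_self]

lemma convPow_apply_of_isGroupLikeElem (φ : WithConv (H →ₐ[k] k)) {g : H}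
    (hg : IsGroupLikeElem k g) (j : ℕ) : (φ ^ j) g = φ g ^ j := by
  induction j with
  | zero => simp [hg.counit_eq_one]
  | succ j ih => rw [pow_succ, convMul_apply_of_isGroupLikeElem _ _ hg, ih, pow_succ]

end Convolution

section Antipode

variable {k H : Type*} [CommRing k] [Ring H] [HopfAlgebra k H]

variable (k H) in
noncomputable def antipodeSq : H →ₐ[k] H :=
  .ofLinearMap (antipode k ∘ₗ antipode k) (by simp)
    fun a b ↦ by simp [antipode_mul_antidistrib]

lemma antipodeSq_apply (x : H) : antipodeSq k H x = antipode k (antipode k x) := rfl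

lemma antipode_antipode_of_antipode_eq {n : ℕ} {q : k} {K E : H} (hK : IsGroupLikeElem k K)
    (hn : 0 < n) (hKn : K ^ n = 1) (hKE : K * E = q • (E * K)) (hSK : antipode k K = K ^ (n - 1))
    (hSE : antipode k E = -(E * K ^ (n - 1))) : antipode k (antipode k E) = q • E := by
  have hSKn : antipode k (K ^ (n - 1)) = K := hSK ▸ hK.antipode_antipode
  rw [hSE, map_neg, antipode_mul_antidistrib, hSKn, hSE, mul_neg, neg_neg, ← mul_assoc, hKE,
    smul_mul_assoc, mul_assoc, ← pow_succ', Nat.sub_add_cancel hn, hKn, mul_one]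

end Antipode

lemma antipodeSq_eq_sandwich {k H : Type*} [CommRing k] [Ring H] [HopfAlgebra k H] {t : ℕ}
    {q : k} {K E : H} (hgen : Algebra.adjoin k {K, E} = ⊤) (hK : IsGroupLikeElem k K)
    (hΔE : Coalgebra.comul (R := k) E = E ⊗ₜ[k] K + 1 ⊗ₜ[k] E) (hKE : K * E = q • (E * K))
    (hSSE : antipode k (antipode k E) = q • E) (hq : q ^ (2 * t + 1) = 1)
    (hcharE : ∀ φ : H →ₐ[k] k, φ E = 0) {χ : WithConv (H →ₐ[k] k)} (hχK : χ K = q) :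
    antipodeSq k H = sandwich (χ ^ t).ofConv (χ ^ (t + 1)).ofConv
      (MulSemiringAction.toAlgHom k H (ConjAct.toConjAct (hK.isUnit.unit ^ (t + 1)))) := by
  set u := hK.isUnit.unit ^ (t + 1)
  have hu : (u : H) = K ^ (t + 1) := by simp [u]
  have hconj (x : H) : MulSemiringAction.toAlgHom k H (ConjAct.toConjAct u) x = u * x * ↑u⁻¹ := by
    simp [ConjAct.units_smul_def]
  refine AlgHom.ext_of_adjoin_pair_eq_top hgen ?_ ?_
  · have huK : (u : H) * K = K * u := by rw [hu, pow_mul_comm']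
    rw [antipodeSq_apply, hK.antipode_antipode, sandwich_apply_of_isGroupLikeElem _ _ _ hK,
      convPow_apply_of_isGroupLikeElem _ hK, convPow_apply_of_isGroupLikeElem _ hK, hχK,
      ← pow_add, (by omega : t + (t + 1) = 2 * t + 1), hq, one_smul, hconj, huK,
      Units.mul_inv_cancel_right]
  · have huE : (u : H) * E = q ^ (t + 1) • (E * u) := by
      rw [hu, pow_mul_eq_pow_smul_mul_pow hKE]
    rw [antipodeSq_apply, hSSE, sandwich_apply_of_comul_eq _ _ _ hΔE, hcharE, hcharE, zero_mul,
      zero_smul, zero_smul, zero_add, add_zero, convPow_apply_of_isGroupLikeElem _ hK, hχK, hconj,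
      huE, smul_mul_assoc, Units.mul_inv_cancel_right, smul_smul, ← pow_add,
      (by omega : t + 1 + (t + 1) = 2 * t + 1 + 1), pow_succ, hq, one_mul]

theorem taft_doublyBalanced_iff_odd_general
    (k H : Type*) [Field k] [Ring H] [HopfAlgebra k H]
    (n : ℕ) (hn : 0 < n) (q : k) (hq : IsPrimitiveRoot q n)
    -- the Taft presentation :
    (K E : H)
    (hKn : K ^ n = 1) (hKE : K * E = q • (E * K))
    (hΔK : Coalgebra.comul (R := k) K = K ⊗ₜ[k] K)
    (hΔE : Coalgebra.comul (R := k) E = E ⊗ₜ[k] K + (1 : H) ⊗ₜ[k] E)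
    (hεK : Coalgebra.counit (R := k) K = 1)
    (hSK : HopfAlgebra.antipode (R := k) K = K ^ (n - 1))
    (hSE : HopfAlgebra.antipode (R := k) E = -(E * K ^ (n - 1)))
    (hgen : Algebra.adjoin k {K, E} = ⊤)
    -- the distinguished group-likes `g = K` and `ζ` with `ζ(K) = q`, `ζ(E) = 0` :
    (ζ : H →ₗ[k] k) (hζmul : ∀ x y : H, ζ (x * y) = ζ x * ζ y) (hζone : ζ 1 = 1)
    (hζK : ζ K = q)
    -- the group-likes of `H_n` are the powers of `K`, and its characters kill `E` and
    -- send `K` to `n`-th roots of unity (the groups `G(H_n)`, `G(H_n^*)` are cyclic of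
    -- order `n`) :
    (hGL : ∀ x : H, x ≠ 0 → Coalgebra.comul (R := k) x = x ⊗ₜ[k] x →
      ∃ m : ℕ, x = K ^ m)
    (hCH : ∀ φ : H →ₗ[k] k, (∀ x y : H, φ (x * y) = φ x * φ y) → φ 1 = 1 →
      (∃ m : ℕ, φ K = q ^ m) ∧ φ E = 0) :
    -- doubly-balanced ↔ `n` odd :
    ((∃ (b binv : H) (βf βinv : H →ₗ[k] k),
        Coalgebra.comul (R := k) b = b ⊗ₜ[k] b ∧ Coalgebra.counit (R := k) b = 1 ∧
        b * binv = 1 ∧ binv * b = 1 ∧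
        (∀ x y : H, βf (x * y) = βf x * βf y) ∧ βf 1 = 1 ∧
        dualMul βf βinv = Coalgebra.counit (R := k) ∧
        dualMul βinv βf = Coalgebra.counit (R := k) ∧
        b * b = K ∧ dualMul βf βf = ζ ∧
        (∀ (x : H) (ι : Type) (s : Finset ι) (xs ys zs : ι → H),
          comul2 (k := k) x = ∑ i ∈ s, (xs i ⊗ₜ[k] ys i) ⊗ₜ[k] zs i →
          HopfAlgebra.antipode (R := k) (HopfAlgebra.antipode (R := k) x) =
            ∑ i ∈ s, (βinv (xs i) * βf (zs i)) • (b * ys i * binv))) ↔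
      Odd n) := by
  have hK : IsGroupLikeElem k K := ⟨hεK, hΔK⟩
  let χ : WithConv (H →ₐ[k] k) := toConv (.ofLinearMap ζ hζone hζmul)
  have hχK : χ K = q := hζK
  constructor
  · rintro ⟨b, -, -, -, hΔb, hεb, -, -, -, -, -, -, hbb, -, -⟩
    obtain ⟨m, rfl⟩ := hGL b (IsGroupLikeElem.ne_zero ⟨hεb, hΔb⟩) hΔb
    refine hq.odd_of_pow_add_self_eq_self (m := m) (hq.ne_zero hn.ne') ?_
    simpa only [map_mul, map_pow, hχK, pow_add] using congrArg χ.ofConv hbb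
  · rintro ⟨t, rfl⟩
    have hcharE (φ : H →ₐ[k] k) : φ E = 0 := (hCH φ.toLinearMap (map_mul φ) (map_one φ)).2
    have hχn : χ ^ (2 * t + 1) = 1 := by
      refine WithConv.ext (AlgHom.ext_of_adjoin_pair_eq_top hgen ?_ (by rw [hcharE, hcharE]))
      rw [convPow_apply_of_isGroupLikeElem _ hK, hχK, hq.pow_eq_one, AlgHom.convOne_apply, hεK,
        map_one]
    have hKR := antipodeSq_eq_sandwich hgen hK hΔE hKE
      (antipode_antipode_of_antipode_eq hK hn hKn hKE hSK hSE) hq.pow_eq_one hcharE hχK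
    set u := hK.isUnit.unit ^ (t + 1)
    have hu_val : (u : H) = K ^ (t + 1) := by simp [u]
    have hu : IsGroupLikeElem k (u : H) := hu_val ▸ hK.pow
    refine ⟨u, ↑u⁻¹, (χ ^ (t + 1)).ofConv.toLinearMap, (χ ^ t).ofConv.toLinearMap,
      hu.comul_eq_tmul_self, hu.counit_eq_one, u.mul_inv, u.inv_mul, map_mul (χ ^ (t + 1)).ofConv,
      map_one (χ ^ (t + 1)).ofConv, ?_, ?_, ?_, ?_, ?_⟩
    · rw [dualMul_toLinearMap, ← pow_add, (by omega : t + 1 + t = 2 * t + 1), hχn,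
        convOne_toLinearMap]
    · rw [dualMul_toLinearMap, ← pow_add, (by omega : t + (t + 1) = 2 * t + 1), hχn,
        convOne_toLinearMap]
    · rw [hu_val, ← pow_add, (by omega : t + 1 + (t + 1) = 2 * t + 1 + 1), pow_succ, hKn, one_mul]
    · rw [dualMul_toLinearMap, ← pow_add, (by omega : t + 1 + (t + 1) = 2 * t + 1 + 1), pow_succ,
        hχn, one_mul]
      rfl
    · intro x ι s xs ys zs hx
      rw [← antipodeSq_apply, hKR, sandwich_apply_of_comul2_eq _ _ _ hx]
      rfl

/-- A Hopf algebra presenting the Taft algebra `H_n` at a primitive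
`n`-th root of unity `q` is doubly-balanced (there are group-likes `b ∈ H`, `β ∈ H^*`
with `b² = g = K`, `β² = ζ` satisfying the Kauffman–Radford condition) iff `n` is odd. -/
theorem taft_doublyBalanced_iff_odd
    (k H : Type*) [Field k] [Ring H] [HopfAlgebra k H] [FiniteDimensional k H]
    (n : ℕ) (hn : 0 < n) (q : k) (hq : IsPrimitiveRoot q n)
    -- the Taft presentation :
    (K E : H)
    (hKn : K ^ n = 1) (hEn : E ^ n = 0) (hKE : K * E = q • (E * K))
    (hΔK : Coalgebra.comul (R := k) K = K ⊗ₜ[k] K)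
    (hΔE : Coalgebra.comul (R := k) E = E ⊗ₜ[k] K + (1 : H) ⊗ₜ[k] E)
    (hεK : Coalgebra.counit (R := k) K = 1) (hεE : Coalgebra.counit (R := k) E = 0)
    (hSK : HopfAlgebra.antipode (R := k) K = K ^ (n - 1))
    (hSE : HopfAlgebra.antipode (R := k) E = -(E * K ^ (n - 1)))
    (hgen : Algebra.adjoin k {K, E} = ⊤)
    -- the distinguished group-likes `g = K` and `ζ` with `ζ(K) = q`, `ζ(E) = 0` :
    (ζ : H →ₗ[k] k) (hζmul : ∀ x y : H, ζ (x * y) = ζ x * ζ y) (hζone : ζ 1 = 1)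
    (hζK : ζ K = q) (hζE : ζ E = 0)
    -- the group-likes of `H_n` are the powers of `K`, and its characters kill `E` and
    -- send `K` to `n`-th roots of unity (the groups `G(H_n)`, `G(H_n^*)` are cyclic of
    -- order `n`) :
    (hGL : ∀ x : H, x ≠ 0 → Coalgebra.comul (R := k) x = x ⊗ₜ[k] x →
      ∃ m : ℕ, x = K ^ m)
    (hCH : ∀ φ : H →ₗ[k] k, (∀ x y : H, φ (x * y) = φ x * φ y) → φ 1 = 1 →
      (∃ m : ℕ, φ K = q ^ m) ∧ φ E = 0) :
    -- doubly-balanced ↔ `n` odd :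
    ((∃ (b binv : H) (βf βinv : H →ₗ[k] k),
        Coalgebra.comul (R := k) b = b ⊗ₜ[k] b ∧ Coalgebra.counit (R := k) b = 1 ∧
        b * binv = 1 ∧ binv * b = 1 ∧
        (∀ x y : H, βf (x * y) = βf x * βf y) ∧ βf 1 = 1 ∧
        dualMul βf βinv = Coalgebra.counit (R := k) ∧
        dualMul βinv βf = Coalgebra.counit (R := k) ∧
        b * b = K ∧ dualMul βf βf = ζ ∧
        (∀ (x : H) (ι : Type) (s : Finset ι) (xs ys zs : ι → H),
          comul2 (k := k) x = ∑ i ∈ s, (xs i ⊗ₜ[k] ys i) ⊗ₜ[k] zs i →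
          HopfAlgebra.antipode (R := k) (HopfAlgebra.antipode (R := k) x) =
            ∑ i ∈ s, (βinv (xs i) * βf (zs i)) • (b * ys i * binv))) ↔
      Odd n) :=
  taft_doublyBalanced_iff_odd_general k H n hn q hq K E hKn hKE hΔK hΔE hεK hSK hSE hgen ζ hζmul
    hζone hζK hGL hCH
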